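/- Let G be a finite group and Γ a permutation group with G_right ≤ Γ ≤ Sym(G). Let S = L₁/L₀ and T = U₁/U₀ be sections of G (L₀ normal in L₁ ≤ G, U₀ normal in U₁ ≤ G) such that T is a multiple of S (i.e., L₀ = U₀ ∩ L₁ and U₁ = U₀·L₁) and such that the partitions of G into the cosets of each of L₀, L₁, U₀, U₁ are Γ-invariant. Then conjugation by the isomorphism f: S → T, g·L₀ ↦ g·U₀ (g ∈ L₁), maps the induced group Γ^{L₁/L₀} onto the induced group Γ^{U₁/U₀}; moreover it maps S_right onto T_right, and for every γ ∈ Γ fixing the identity of G it maps the permutation of S induced by γ to the permutation of T induced by γ. -/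

import Mathlib

open scoped Pointwise

/-- `X` is a union of members of the family `B` of sets. -/
def IsUnionOf {V : Type*} (B : Set (Set V)) (X : Set V) : Prop :=
  ∀ Y ∈ B, (Y ∩ X).Nonempty → Y ⊆ X

/-- An S-ring over a group `G`, presented by the partition of `G` into its basic sets.
The field `structConst` states exactly that the ℤ-span of the sums `∑_{x ∈ X} x`
(`X` a basic set) is closed under multiplication in the group ring `ℤG`, i.e. that this
span is a subring of `ℤG`. -/
structure SRing (G : Type*) [Group G] where
  basic : Set (Set G)
  isPartition : Setoid.IsPartition basic
  one_mem : {(1 : G)} ∈ basic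
  inv_mem : ∀ X ∈ basic, X⁻¹ ∈ basic
  structConst : ∀ X ∈ basic, ∀ Y ∈ basic, ∀ Z ∈ basic, ∀ z ∈ Z, ∀ z' ∈ Z,
      Set.ncard {p : G × G | p.1 ∈ X ∧ p.2 ∈ Y ∧ p.1 * p.2 = z}
        = Set.ncard {p : G × G | p.1 ∈ X ∧ p.2 ∈ Y ∧ p.1 * p.2 = z'}

/-- The group `G_right` of right translations, as a subgroup of `Sym(G)`. -/
def rightMulGroup (G : Type*) [Group G] : Subgroup (Equiv.Perm G) where
  carrier := {γ | ∃ g : G, ∀ x, γ x = x * g}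
  one_mem' := ⟨1, fun x => (mul_one x).symm⟩
  mul_mem' := by
    rintro γ δ ⟨g, hg⟩ ⟨h, hh⟩
    exact ⟨h * g, fun x => by simp only [Equiv.Perm.mul_apply, hg, hh, mul_assoc]⟩
  inv_mem' := by
    rintro γ ⟨g, hg⟩
    refine ⟨g⁻¹, fun x => γ.injective ?_⟩
    rw [← Equiv.Perm.mul_apply, mul_inv_cancel, Equiv.Perm.one_apply, hg, inv_mul_cancel_right]

/-- The radical `rad(X) = {g : gX = Xg = X}` of a subset of a group. -/
def radSet {G : Type*} [Group G] (X : Set G) : Set G :=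
  {g : G | (fun y => g * y) '' X = X ∧ (fun y => y * g) '' X = X}

namespace SRing

variable {G : Type*} [Group G]

/-- `X` is an `A`-set, i.e. a union of basic sets of `A`. -/
def IsASet (A : SRing G) (X : Set G) : Prop := IsUnionOf A.basic X

/-- The automorphism group of an S-ring, as a subgroup of `Sym(G)`. -/
def aut (A : SRing G) : Subgroup (Equiv.Perm G) where
  carrier := {f | ∀ X ∈ A.basic, ∀ g h : G, h * g⁻¹ ∈ X ↔ f h * (f g)⁻¹ ∈ X}
  one_mem' := fun X _ g h => Iff.rfl
  mul_mem' := by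
    intro f f' hf hf' X hX g h
    exact (hf' X hX g h).trans (hf X hX (f' g) (f' h))
  inv_mem' := by
    intro f hf X hX g h
    simpa using (hf X hX (f⁻¹ g) (f⁻¹ h)).symm

/-- An S-ring is schurian if its basic sets are the orbits of the stabilizer of `1`
in some permutation group `Γ` with `G_right ≤ Γ ≤ Sym(G)`. -/
def IsSchurian (A : SRing G) : Prop :=
  ∃ Γ : Subgroup (Equiv.Perm G), rightMulGroup G ≤ Γ ∧
    A.basic = {X : Set G | ∃ x : G, X = {y : G | ∃ γ ∈ Γ, γ 1 = 1 ∧ γ x = y}}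

/-- An S-ring is normal if `G_right` is a normal subgroup of its automorphism group. -/
def IsNormal (A : SRing G) : Prop :=
  rightMulGroup G ≤ A.aut ∧
    ∀ f ∈ A.aut, ∀ γ ∈ rightMulGroup G, f * γ * f⁻¹ ∈ rightMulGroup G

/-- The basic sets of the restriction `A_U` of `A` to a subgroup `U`. -/
def resBasic (A : SRing G) (U : Subgroup G) : Set (Set U) :=
  {Xr | ∃ X ∈ A.basic, X ⊆ ↑U ∧ Xr = ((↑) : U → G) ⁻¹' X}

/-- The basic sets of the quotient S-ring `A_{G/L}`. -/
def quotBasic (A : SRing G) (L : Subgroup G) : Set (Set (G ⧸ L)) :=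
  {Xq | ∃ X ∈ A.basic, Xq = QuotientGroup.mk '' X}

/-- The basic sets of the S-ring `A_{U/L}` over the section `U/L`. -/
def secBasic (A : SRing G) (U L : Subgroup G) : Set (Set (U ⧸ L.subgroupOf U)) :=
  {Xs | ∃ X ∈ A.basic, X ⊆ ↑U ∧
    Xs = QuotientGroup.mk '' (((↑) : U → G) ⁻¹' X)}

/-- The `U/L`-condition: `L` and `U` are `A`-subgroups, `L ≤ U`, `L` is normal in `G`, and
every basic set of `A` outside of `U` is a union of `L`-cosets. -/
def ULcondition (A : SRing G) (L U : Subgroup G) : Prop :=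
  L.Normal ∧ L ≤ U ∧ A.IsASet ↑L ∧ A.IsASet ↑U ∧
    ∀ X ∈ A.basic, X ⊆ (↑U : Set G)ᶜ → (↑L : Set G) * X = X ∧ X * (↑L : Set G) = X

/-- `B` is a proper (nontrivial) wreath product. -/
def IsProperWreath {K : Type*} [Group K] (B : SRing K) : Prop :=
  ∃ H : Subgroup K, B.IsASet ↑H ∧ H ≠ ⊥ ∧ H ≠ ⊤ ∧
    ∀ X ∈ B.basic, X ⊆ (↑H : Set K)ᶜ → (↑H : Set K) * X = X ∧ X * (↑H : Set K) = X

end SRing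

/-- Two sets of permutations of `V` are 2-equivalent iff they have the same orbits in the
coordinatewise action on `V × V`. -/
def TwoEquiv {V : Type*} (Γ Δ : Set (Equiv.Perm V)) : Prop :=
  ∀ p : V × V,
    {q : V × V | ∃ γ ∈ Γ, q = (γ p.1, γ p.2)} = {q : V × V | ∃ δ ∈ Δ, q = (δ p.1, δ p.2)}

/-- The holomorph `Hol(S)`, as a set of permutations of `S`. -/
def HolSet (S : Type*) [Group S] : Set (Equiv.Perm S) :=
  {π | ∃ (σ : S ≃* S) (s : S), ∀ x, π x = σ x * s}

/-- Permutations of `G ⧸ L` induced by the members of a set `Γ` of permutations of `G`. -/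
def inducedQuot {G : Type*} [Group G] (Γ : Set (Equiv.Perm G)) (L : Subgroup G) :
    Set (Equiv.Perm (G ⧸ L)) :=
  {σ | ∃ γ ∈ Γ, ∀ x : G, σ (QuotientGroup.mk x) = QuotientGroup.mk (γ x)}

/-- Permutations of the section `U/L` induced by the members of a set `Γ` of permutations
of `G` stabilizing `U` setwise. -/
def inducedSec {G : Type*} [Group G] (Γ : Set (Equiv.Perm G)) (U L : Subgroup G) :
    Set (Equiv.Perm (U ⧸ L.subgroupOf U)) :=
  {σ | ∃ γ ∈ Γ, (∀ u : U, γ ↑u ∈ U) ∧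
    ∀ u v : U, γ ↑u = ↑v → σ (QuotientGroup.mk u) = QuotientGroup.mk v}

/-- Permutations of the section `U/L` induced by the members of a set `Δ` of permutations
of `G ⧸ L` stabilizing the image of `U` setwise. -/
def inducedSecOfQuot {G : Type*} [Group G] {L : Subgroup G} (Δ : Set (Equiv.Perm (G ⧸ L)))
    (U : Subgroup G) : Set (Equiv.Perm (U ⧸ L.subgroupOf U)) :=
  {σ | ∃ δ ∈ Δ,
    (∀ u : U, ∃ v : U, δ (QuotientGroup.mk (u : G)) = QuotientGroup.mk (v : G)) ∧
    ∀ u v : U, δ (QuotientGroup.mk (u : G)) = QuotientGroup.mk (v : G) →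
      σ (QuotientGroup.mk u) = QuotientGroup.mk v}

/-- `H` is a normal subgroup of `K` (both being subgroups of some ambient group). -/
def NormalIn {Γ : Type*} [Group Γ] (H K : Subgroup Γ) : Prop :=
  H ≤ K ∧ ∀ x ∈ K, ∀ h ∈ H, x * h * x⁻¹ ∈ H

/-- `H` is a composition series of the ambient group `Γ`: a chain
`⊥ = H 0 ⊴ H 1 ⊴ ⋯ ⊴ H m = ⊤` in which each term is a maximal proper normal subgroup
of the next one (equivalently, all successive quotients are simple). -/
def IsCompSeries {Γ : Type*} [Group Γ] {m : ℕ} (H : Fin (m + 1) → Subgroup Γ) : Prop :=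
  H 0 = ⊥ ∧ H (Fin.last m) = ⊤ ∧ ∀ i : Fin m,
    NormalIn (H i.castSucc) (H i.succ) ∧ H i.castSucc ≠ H i.succ ∧
    ∀ K : Subgroup Γ, H i.castSucc ≤ K → NormalIn K (H i.succ) →
      K = H i.castSucc ∨ K = H i.succ

/-- `Q` is a composition factor of `Γ`: `Q` is isomorphic (via a surjection with the right
kernel) to a successive quotient of some composition series of `Γ`. -/
def IsCompFactor (Γ : Type*) [Group Γ] (Q : Type*) [Group Q] : Prop :=
  ∃ (m : ℕ) (H : Fin (m + 1) → Subgroup Γ), IsCompSeries H ∧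
    ∃ (i : Fin m) (φ : ↥(H i.succ) →* Q), Function.Surjective φ ∧
      φ.ker = (H i.castSucc).subgroupOf (H i.succ)

private lemma mk_subgroupOf_eq_iff {G : Type*} [Group G] {H K : Subgroup G} (x y : K) :
    (QuotientGroup.mk x : K ⧸ H.subgroupOf K) = QuotientGroup.mk y ↔
      (x : G)⁻¹ * (y : G) ∈ H := by
  rw [QuotientGroup.eq, Subgroup.mem_subgroupOf]
  rfl

/-- Lemma 3.1.  Let `G` be a finite group, `G_right ≤ Γ ≤ Sym(G)`, and
let `S = L₁/L₀`, `T = U₁/U₀` be `Γ`-invariant sections of `G` with `T` a multiple of `S`.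
Then conjugation by the natural isomorphism `f : S ≃* T`, `g·L₀ ↦ g·U₀`, maps the induced
group `Γ^S` onto `Γ^T` and maps `S_right` onto `T_right`; moreover, for every `γ ∈ Γ`
fixing `1`, it maps the permutation of `S` induced by `γ` to the permutation of `T`
induced by `γ`. -/
theorem conj_induced_sections {G : Type*} [Group G] [Finite G]
    (Γ : Subgroup (Equiv.Perm G)) (hΓ : rightMulGroup G ≤ Γ)
    (L₀ L₁ U₀ U₁ : Subgroup G) (hL : L₀ ≤ L₁) (hU : U₀ ≤ U₁)
    [hLn : (L₀.subgroupOf L₁).Normal] [hUn : (U₀.subgroupOf U₁).Normal]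
    (hmeet : U₀ ⊓ L₁ = L₀) (hjoin : (↑U₁ : Set G) = ↑U₀ * ↑L₁)
    (hinv : ∀ H ∈ ({L₀, L₁, U₀, U₁} : Set (Subgroup G)), ∀ γ ∈ Γ, ∀ x y : G,
      x⁻¹ * y ∈ H → (γ x)⁻¹ * γ y ∈ H)
    (f : (L₁ ⧸ L₀.subgroupOf L₁) ≃* (U₁ ⧸ U₀.subgroupOf U₁))
    (hf : ∀ (g : L₁) (g' : U₁), (g : G) = (g' : G) →
      f (QuotientGroup.mk g) = QuotientGroup.mk g') :
    ((fun σ : Equiv.Perm (L₁ ⧸ L₀.subgroupOf L₁) =>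
        ((f.symm.toEquiv.trans σ).trans f.toEquiv :
          Equiv.Perm (U₁ ⧸ U₀.subgroupOf U₁))) ''
        inducedSec (↑Γ : Set (Equiv.Perm G)) L₁ L₀
      = inducedSec (↑Γ : Set (Equiv.Perm G)) U₁ U₀) ∧
    ((fun σ : Equiv.Perm (L₁ ⧸ L₀.subgroupOf L₁) =>
        ((f.symm.toEquiv.trans σ).trans f.toEquiv :
          Equiv.Perm (U₁ ⧸ U₀.subgroupOf U₁))) ''
        ↑(rightMulGroup (L₁ ⧸ L₀.subgroupOf L₁))
      = ↑(rightMulGroup (U₁ ⧸ U₀.subgroupOf U₁))) ∧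
    (∀ γ ∈ Γ, γ 1 = 1 →
      ∀ (σ : Equiv.Perm (L₁ ⧸ L₀.subgroupOf L₁))
        (τ : Equiv.Perm (U₁ ⧸ U₀.subgroupOf U₁)),
        ((∀ u : L₁, γ ↑u ∈ L₁) ∧ ∀ u v : L₁, γ ↑u = ↑v →
          σ (QuotientGroup.mk u) = QuotientGroup.mk v) →
        ((∀ u : U₁, γ ↑u ∈ U₁) ∧ ∀ u v : U₁, γ ↑u = ↑v →
          τ (QuotientGroup.mk u) = QuotientGroup.mk v) →
        ∀ x : L₁ ⧸ L₀.subgroupOf L₁, τ (f x) = f (σ x)) := by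
  classical
  have hLU : L₁ ≤ U₁ := by
    intro x hx
    have hx' : x ∈ (↑U₀ : Set G) * (↑L₁ : Set G) := by
      have := Set.mul_mem_mul (show (1:G) ∈ (↑U₀ : Set G) from U₀.one_mem)
        (show x ∈ (↑L₁ : Set G) from hx)
      rwa [one_mul] at this
    rw [← hjoin] at hx'
    exact hx'
  have hL₁mem : L₁ ∈ ({L₀, L₁, U₀, U₁} : Set (Subgroup G)) := by simp
  have hU₀mem : U₀ ∈ ({L₀, L₁, U₀, U₁} : Set (Subgroup G)) := by simp
  have hU₁mem : U₁ ∈ ({L₀, L₁, U₀, U₁} : Set (Subgroup G)) := by simp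
  -- normality of U₀ in U₁, unfolded
  have hconj : ∀ a ∈ U₀, ∀ l ∈ U₁, l⁻¹ * a * l ∈ U₀ := by
    intro a ha l hl
    have := hUn.conj_mem ⟨a, hU ha⟩ (by simpa [Subgroup.mem_subgroupOf] using ha)
      (⟨l, hl⟩ : U₁)⁻¹
    simpa [Subgroup.mem_subgroupOf, mul_assoc] using this
  -- Key computation: if `γ ∈ Γ` stabilizes `L₁` and induces `σ` on `L₁/L₀`, then the
  -- conjugate `f ∘ σ ∘ f⁻¹` is induced by `γ` on `U₁/U₀`.
  have keyA : ∀ γ ∈ Γ, ∀ (hγL : ∀ u : L₁, γ ↑u ∈ L₁)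
      (σ : Equiv.Perm (L₁ ⧸ L₀.subgroupOf L₁)),
      (∀ u v : L₁, γ ↑u = ↑v → σ (QuotientGroup.mk u) = QuotientGroup.mk v) →
      ∀ u v : U₁, γ ↑u = ↑v →
        f (σ (f.symm (QuotientGroup.mk u))) = QuotientGroup.mk v := by
    intro γ hγ hγL σ hσ u v huv
    have hu : (↑u : G) ∈ (↑U₀ : Set G) * (↑L₁ : Set G) := by rw [← hjoin]; exact u.2
    obtain ⟨a, ha, l, hl, hal⟩ := hu
    have h1 : (QuotientGroup.mk u : U₁ ⧸ U₀.subgroupOf U₁)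
        = QuotientGroup.mk ⟨l, hLU hl⟩ := by
      rw [mk_subgroupOf_eq_iff]
      have : (↑u : G)⁻¹ * l = l⁻¹ * a⁻¹ * l := by rw [← hal]; group
      rw [this]
      exact hconj _ (U₀.inv_mem ha) _ (hLU hl)
    have h2 : f.symm (QuotientGroup.mk (⟨l, hLU hl⟩ : U₁)) = QuotientGroup.mk ⟨l, hl⟩ := by
      rw [← hf ⟨l, hl⟩ ⟨l, hLU hl⟩ rfl, MulEquiv.symm_apply_apply]
    have h3 : σ (QuotientGroup.mk (⟨l, hl⟩ : L₁)) = QuotientGroup.mk ⟨γ l, hγL ⟨l, hl⟩⟩ :=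
      hσ ⟨l, hl⟩ ⟨γ l, hγL ⟨l, hl⟩⟩ rfl
    have h4 : f (QuotientGroup.mk (⟨γ l, hγL ⟨l, hl⟩⟩ : L₁))
        = QuotientGroup.mk ⟨γ l, hLU (hγL ⟨l, hl⟩)⟩ := hf _ _ rfl
    have h5 : (QuotientGroup.mk (⟨γ l, hLU (hγL ⟨l, hl⟩)⟩ : U₁) : U₁ ⧸ U₀.subgroupOf U₁)
        = QuotientGroup.mk v := by
      rw [mk_subgroupOf_eq_iff]
      have hlu : l⁻¹ * (↑u : G) ∈ U₀ := by
        have : l⁻¹ * (↑u : G) = l⁻¹ * a * l := by rw [← hal]; group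
        rw [this]
        exact hconj _ ha _ (hLU hl)
      have := hinv U₀ hU₀mem γ hγ l ↑u hlu
      rwa [huv] at this
    rw [h1, h2, h3, h4, h5]
  refine ⟨?_, ?_, ?_⟩
  · -- Part 1: conjugation maps Γ^{L₁/L₀} onto Γ^{U₁/U₀}
    apply Set.Subset.antisymm
    · rintro τ ⟨σ, ⟨γ, hγ, hγL, hσ⟩, rfl⟩
      have hγ1 : γ 1 ∈ L₁ := by simpa using hγL ⟨1, L₁.one_mem⟩
      refine ⟨γ, hγ, ?_, ?_⟩
      · intro u
        have h2 := hinv U₁ hU₁mem γ hγ 1 ↑u (by simpa using u.2)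
        have h3 : γ ↑u = γ 1 * ((γ 1)⁻¹ * γ ↑u) := (mul_inv_cancel_left _ _).symm
        rw [h3]
        exact U₁.mul_mem (hLU hγ1) h2
      · intro u v huv
        have := keyA γ hγ hγL σ hσ u v huv
        simpa [Equiv.trans_apply] using this
    · rintro τ ⟨δ, hδΓ, hδU, hδτ⟩
      set g : G := δ 1 with hgdef
      have hgU : g ∈ U₁ := by simpa using hδU ⟨1, U₁.one_mem⟩
      obtain ⟨h, hh⟩ := QuotientGroup.mk_surjective
        (f.symm (QuotientGroup.mk (⟨g, hgU⟩ : U₁)))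
      have hfh : f (QuotientGroup.mk h) = QuotientGroup.mk ⟨g, hgU⟩ := by
        rw [hh, MulEquiv.apply_symm_apply]
      have hhg : g⁻¹ * (↑h : G) ∈ U₀ := by
        have h6 : (QuotientGroup.mk (⟨↑h, hLU h.2⟩ : U₁) : U₁ ⧸ U₀.subgroupOf U₁)
            = QuotientGroup.mk ⟨g, hgU⟩ := by rw [← hf h ⟨↑h, hLU h.2⟩ rfl, hfh]
        have := (mk_subgroupOf_eq_iff _ _).mp h6
        simpa using U₀.inv_mem this
      set γ : Equiv.Perm G := (Equiv.mulRight (g⁻¹ * ↑h)) * δ with hγdef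
      have hγΓ : γ ∈ Γ := Γ.mul_mem (hΓ ⟨g⁻¹ * ↑h, fun x => rfl⟩) hδΓ
      have hγapp : ∀ x, γ x = δ x * (g⁻¹ * ↑h) := fun x => rfl
      have hγ1 : γ 1 = ↑h := by rw [hγapp, ← hgdef]; group
      have hγL : ∀ u : L₁, γ ↑u ∈ L₁ := by
        intro u
        have h2 := hinv L₁ hL₁mem γ hγΓ 1 ↑u (by simpa using u.2)
        rw [hγ1] at h2
        have h3 : γ ↑u = ↑h * ((↑h : G)⁻¹ * γ ↑u) := (mul_inv_cancel_left _ _).symm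
        rw [h3]
        exact L₁.mul_mem h.2 h2
      refine ⟨(f.toEquiv.trans τ).trans f.symm.toEquiv, ⟨γ, hγΓ, hγL, ?_⟩, ?_⟩
      · intro u v huv
        have hw : δ ↑u ∈ U₁ := by simpa using hδU ⟨↑u, hLU u.2⟩
        have hτ := hδτ ⟨↑u, hLU u.2⟩ ⟨δ ↑u, hw⟩ rfl
        show f.symm (τ (f (QuotientGroup.mk u))) = QuotientGroup.mk v
        rw [hf u ⟨↑u, hLU u.2⟩ rfl, hτ, MulEquiv.symm_apply_eq,
          hf v ⟨↑v, hLU v.2⟩ rfl, mk_subgroupOf_eq_iff]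
        have : (δ (↑u : G))⁻¹ * (↑v : G) = g⁻¹ * ↑h := by
          rw [← huv, hγapp]; group
        rw [this]
        exact hhg
      · ext y
        simp [Equiv.trans_apply]
  · -- Part 2: conjugation maps S_right onto T_right
    ext τ
    simp only [Set.mem_image, SetLike.mem_coe]
    constructor
    · rintro ⟨π, hπ, rfl⟩
      obtain ⟨s, hs⟩ := hπ
      exact ⟨f s, fun y => by simp [Equiv.trans_apply, hs, map_mul]⟩
    · rintro ⟨t, ht⟩
      refine ⟨(f.toEquiv.trans τ).trans f.symm.toEquiv,
        ⟨f.symm t, fun x => by simp [Equiv.trans_apply, ht, map_mul]⟩, ?_⟩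
      ext y
      simp [Equiv.trans_apply]
  · -- Part 3
    intro γ hγ _ σ τ hS hT x
    induction x using QuotientGroup.induction_on with
    | H u =>
      have h1 : f (QuotientGroup.mk u) = QuotientGroup.mk ⟨↑u, hLU u.2⟩ := hf _ _ rfl
      have h2 : τ (QuotientGroup.mk (⟨↑u, hLU u.2⟩ : U₁))
          = QuotientGroup.mk ⟨γ ↑u, hT.1 ⟨↑u, hLU u.2⟩⟩ :=
        hT.2 ⟨↑u, hLU u.2⟩ ⟨γ ↑u, hT.1 ⟨↑u, hLU u.2⟩⟩ rfl
      have h3 : σ (QuotientGroup.mk u) = QuotientGroup.mk ⟨γ ↑u, hS.1 u⟩ :=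
        hS.2 u ⟨γ ↑u, hS.1 u⟩ rfl
      have h4 : f (QuotientGroup.mk (⟨γ ↑u, hS.1 u⟩ : L₁))
          = QuotientGroup.mk ⟨γ ↑u, hT.1 ⟨↑u, hLU u.2⟩⟩ := hf _ _ rfl
      rw [h1, h2, h3, h4]
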